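/- arXiv:2409.01177 — 2 statements merged into one kernel-verified Lean document; each statement's English description precedes it below -/
import Mathlib

section
/- Suppose ε̂ is a perturbed risk level for ambiguity set A with nominal P̂, and a sample-based decision operator x̂_s: Δ^N → X satisfies P̂^N{V_P̂(x̂_s(D_N)) > α} ≤ F_N(α) for all α ∈ [0,1]. Then for every P ∈ A and every ε ∈ [0,1], P̂^N{V_P(x̂_s(D_N)) > ε} ≤ F_N(ε̂(ε)). -/
open MeasureTheory

theorem stmt_8 {Δ X : Type*} [MeasurableSpace Δ] (N : ℕ)
    (A : Set (Measure Δ)) (Phat : Measure Δ) [IsProbabilityMeasure Phat] (hPhat : Phat ∈ A)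
    (g : Δ → X → ℝ) (xs : (Fin N → Δ) → X)
    (V : Measure Δ → X → ℝ)
    (hV : ∀ P x, V P x = (P {δ : Δ | 0 < g δ x}).toReal)
    (εhat : ℝ → ℝ) (hεhat : ∀ ε ∈ Set.Icc (0:ℝ) 1, εhat ε ∈ Set.Icc (0:ℝ) 1)
    (hPRL : ∀ ε ∈ Set.Icc (0:ℝ) 1, ∀ E : Set Δ, MeasurableSet E →
      Phat E ≤ ENNReal.ofReal (εhat ε) → ∀ P ∈ A, P E ≤ ENNReal.ofReal ε)
    (FN : ℝ → ℝ)
    (hF : ∀ α ∈ Set.Icc (0:ℝ) 1,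
      Measure.pi (fun _ : Fin N => Phat) {D | α < V Phat (xs D)} ≤ ENNReal.ofReal (FN α)) :
    ∀ P ∈ A, ∀ ε ∈ Set.Icc (0:ℝ) 1,
      Measure.pi (fun _ : Fin N => Phat) {D | ε < V P (xs D)} ≤
        ENNReal.ofReal (FN (εhat ε)) := by
  intro P hP ε hε
  have hsub : {D : Fin N → Δ | ε < V P (xs D)} ⊆ {D | εhat ε < V Phat (xs D)} := by
    intro D hD
    by_contra hcon
    simp only [Set.mem_setOf_eq, not_lt, hV] at hcon
    set E : Set Δ := {δ : Δ | 0 < g δ (xs D)} with hE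
    set E' := toMeasurable Phat E with hE'
    have hPhatE' : Phat E' ≤ ENNReal.ofReal (εhat ε) := by
      rw [hE', measure_toMeasurable]
      have hfin : Phat E ≠ ⊤ := measure_ne_top _ _
      rw [← ENNReal.ofReal_toReal hfin]
      exact ENNReal.ofReal_le_ofReal (hcon)
    have hPE : P E ≤ ENNReal.ofReal ε :=
      le_trans (measure_mono (subset_toMeasurable Phat E))
        (hPRL ε hε E' (measurableSet_toMeasurable _ _) hPhatE' P hP)
    have : V P (xs D) ≤ ε := by
      rw [hV]
      exact ENNReal.toReal_le_of_le_ofReal hε.1 hPE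
    exact absurd hD (by simp [not_lt.mpr this])
  exact le_trans (measure_mono hsub) (hF (εhat ε) (hεhat ε hε))
end

section
/- For integers 1 ≤ d ≤ N and real M ≥ 1, the following identity holds: ∫₀¹ d·C(N,d)·(ε/M)^d·(1 − ε/M)^{N−d} dε = Σ_{i=d}^{N} C(N,i)·(1/M)^i·(1 − 1/M)^{N−i}·(d/(i+1)). -/
/-!
Writing `1 - ε t = t (1 - ε) + (1 - t)` and expanding by the binomial theorem turns the integrand
into a combination of `ε ^ d (1 - ε) ^ j`, whose integrals are Beta values
`1 / ((d + j + 1) C(d + j, d))`; the identity `C(N, i) C(i, d) = C(N, d) C(N - d, i - d)` then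
collapses each coefficient to `C(N, i) d / (i + 1)`.
-/

open Finset intervalIntegral

theorem integral_pow_mul_one_sub_pow_succ_right (a b : ℕ) :
    ((a : ℝ) + 1) * ∫ x in (0:ℝ)..1, x ^ a * (1 - x) ^ (b + 1) =
      ((b : ℝ) + 1) * ∫ x in (0:ℝ)..1, x ^ (a + 1) * (1 - x) ^ b := by
  have hderiv : ∀ x : ℝ, HasDerivAt (fun x : ℝ => x ^ (a + 1) * (1 - x) ^ (b + 1))
      (((a : ℝ) + 1) * (x ^ a * (1 - x) ^ (b + 1)) -
        ((b : ℝ) + 1) * (x ^ (a + 1) * (1 - x) ^ b)) x := by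
    intro x
    have hleft : HasDerivAt (fun x : ℝ => x ^ (a + 1)) (((a : ℝ) + 1) * x ^ a) x := by
      simpa using hasDerivAt_pow (a + 1) x
    have hright :
        HasDerivAt (fun x : ℝ => (1 - x) ^ (b + 1)) (-(((b : ℝ) + 1) * (1 - x) ^ b)) x := by
      simpa [Function.comp_def] using
        (hasDerivAt_pow (b + 1) (1 - x)).comp x ((hasDerivAt_id x).const_sub 1)
    exact (hleft.mul hright).congr_deriv (by ring)
  have hftc := integral_eq_sub_of_hasDerivAt (fun x _ => hderiv x)
    (Continuous.intervalIntegrable (by fun_prop) 0 1)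
  rw [integral_sub (Continuous.intervalIntegrable (by fun_prop) _ _)
    (Continuous.intervalIntegrable (by fun_prop) _ _), integral_const_mul,
    integral_const_mul] at hftc
  simp only [one_pow, sub_self, zero_pow (Nat.succ_ne_zero _), mul_zero, zero_mul, sub_zero] at hftc
  linarith

theorem integral_pow_mul_one_sub_pow (a b : ℕ) :
    ∫ x in (0:ℝ)..1, x ^ a * (1 - x) ^ b = 1 / (((a + b : ℕ) + 1) * (a + b).choose a) := by
  induction b generalizing a with
  | zero => simp [integral_pow]
  | succ b ih =>
    have hrec := integral_pow_mul_one_sub_pow_succ_right a b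
    have hchoose := Nat.choose_succ_right_eq (a + b + 1) a
    rw [ih, show a + 1 + b = a + b + 1 by omega] at hrec
    rw [show a + b + 1 - a = b + 1 by omega] at hchoose
    rw [← add_assoc]
    have hpos : 0 < (a + b + 1).choose a := Nat.choose_pos (by omega)
    have hpos' : 0 < (a + b + 1).choose (a + 1) := Nat.choose_pos (by omega)
    field_simp at hrec ⊢
    apply mul_left_cancel₀ (show (b : ℝ) + 1 ≠ 0 by positivity)
    have hchooseR :
        ((a + b + 1).choose (a + 1) : ℝ) * (a + 1) = (a + b + 1).choose a * (b + 1) := by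
      exact_mod_cast hchoose
    linear_combination hrec - (∫ x in (0:ℝ)..1, x ^ a * (1 - x) ^ (b + 1)) *
      (((a + b + 1 : ℕ) : ℝ) + 1) * hchooseR

theorem one_sub_mul_pow_eq_sum (n : ℕ) (ε t : ℝ) :
    (1 - ε * t) ^ n =
      ∑ j ∈ range (n + 1), (n.choose j : ℝ) * t ^ j * (1 - t) ^ (n - j) * (1 - ε) ^ j := by
  rw [show 1 - ε * t = t * (1 - ε) + (1 - t) by ring, add_pow]
  exact sum_congr rfl fun j _ => by rw [mul_pow]; ring

theorem choose_mul_choose_sub_div_choose (N d j : ℕ) :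
    (N.choose d * (N - d).choose j : ℝ) / (d + j).choose d = N.choose (d + j) := by
  have hmul := Nat.choose_mul (n := N) (Nat.le_add_right d j)
  rw [Nat.add_sub_cancel_left] at hmul
  have hpos : 0 < (d + j).choose d := Nat.choose_pos (Nat.le_add_right d j)
  rw [div_eq_iff (by positivity)]
  exact_mod_cast hmul.symm

theorem integral_mul_pow_mul_one_sub_mul_pow (N d : ℕ) (hdN : d ≤ N) (t : ℝ) :
    ∫ ε in (0:ℝ)..1, (d : ℝ) * (N.choose d : ℝ) * (ε * t) ^ d * (1 - ε * t) ^ (N - d) =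
      ∑ i ∈ Icc d N,
        (N.choose i : ℝ) * t ^ i * (1 - t) ^ (N - i) * ((d : ℝ) / (i + 1)) := by
  set c : ℕ → ℝ := fun j =>
    d * N.choose d * (N - d).choose j * t ^ (d + j) * (1 - t) ^ (N - d - j)
  have hexpand : ∀ ε : ℝ, (d : ℝ) * N.choose d * (ε * t) ^ d * (1 - ε * t) ^ (N - d) =
      ∑ j ∈ range (N - d + 1), c j * (ε ^ d * (1 - ε) ^ j) := by
    intro ε
    rw [one_sub_mul_pow_eq_sum, mul_sum]
    exact sum_congr rfl fun j _ => by ring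
  have hbeta : ∀ j ∈ range (N - d + 1), ∫ ε in (0:ℝ)..1, c j * (ε ^ d * (1 - ε) ^ j) =
      (N.choose (d + j) : ℝ) * t ^ (d + j) * (1 - t) ^ (N - (d + j)) *
        ((d : ℝ) / ((d + j : ℕ) + 1)) := by
    intro j _
    rw [integral_const_mul, integral_pow_mul_one_sub_pow, ← choose_mul_choose_sub_div_choose,
      ← Nat.sub_sub]
    simp only [c]
    field_simp
  simp_rw [hexpand]
  rw [integral_finsetSum fun j _ => Continuous.intervalIntegrable (by fun_prop) _ _,
    ← Ico_add_one_right_eq_Icc, sum_Ico_eq_sum_range, Nat.sub_add_comm hdN]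
  exact sum_congr rfl hbeta

theorem stmt_15_general (N d : ℕ) (hdN : d ≤ N) (M : ℝ) :
    ∫ ε in (0:ℝ)..1, (d : ℝ) * (N.choose d : ℝ) * (ε / M) ^ d * (1 - ε / M) ^ (N - d) =
      ∑ i ∈ Finset.Icc d N,
        (N.choose i : ℝ) * (1 / M) ^ i * (1 - 1 / M) ^ (N - i) * ((d : ℝ) / (i + 1)) := by
  simpa only [mul_one_div] using integral_mul_pow_mul_one_sub_mul_pow N d hdN (1 / M)

theorem stmt_15 (N d : ℕ) (hd : 1 ≤ d) (hdN : d ≤ N) (M : ℝ) (hM : 1 ≤ M) :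
    ∫ ε in (0:ℝ)..1, (d : ℝ) * (N.choose d : ℝ) * (ε / M) ^ d * (1 - ε / M) ^ (N - d) =
      ∑ i ∈ Finset.Icc d N,
        (N.choose i : ℝ) * (1 / M) ^ i * (1 - 1 / M) ^ (N - i) * ((d : ℝ) / (i + 1)) :=
  stmt_15_general N d hdN M
end
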